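/- arXiv:2601.01986 — 3 statements merged into one kernel-verified Lean document; each statement's English description precedes it below -/
import Mathlib

section
/- Let ω, β, ν_h, ν_3 be positive reals, ξ = (ξ_x, ξ_y) ∈ ℝ², and α ∈ (-π/2, π/2) with sin α ≠ 0. Set s = sin α, c = cos α. If μ is a purely imaginary complex root of the characteristic polynomial P(μ) = iω(μ² - |ξ|²) + β(icξ_x + sμ) - (ν_h((icξ_x + sμ)² - ξ_y²) + ν_3(isξ_x - cμ)²)·((icξ_x + sμ)² - ξ_y²), then ξ_y = 0 and ω = 0, or ξ = 0. -/
open Complex Real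

theorem characteristic_no_imaginary_roots
    (ω β νh ν3 : ℝ) (hω : 0 < ω) (hβ : 0 < β) (hνh : 0 < νh) (hν3 : 0 < ν3)
    (ξx ξy : ℝ) (α : ℝ) (hα : α ∈ Set.Ioo (-(π/2)) (π/2)) (hs : Real.sin α ≠ 0)
    (μ : ℂ) (hμ : μ.re = 0)
    (hroot :
      I * ω * (μ^2 - ((ξx^2 + ξy^2 : ℝ) : ℂ))
        + (β : ℂ) * (I * (Real.cos α : ℂ) * ξx + (Real.sin α : ℂ) * μ)
        - ((νh : ℂ) * ((I * (Real.cos α : ℂ) * ξx + (Real.sin α : ℂ) * μ)^2 - (ξy : ℂ)^2)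
            + (ν3 : ℂ) * (I * (Real.sin α : ℂ) * ξx - (Real.cos α : ℂ) * μ)^2)
          * ((I * (Real.cos α : ℂ) * ξx + (Real.sin α : ℂ) * μ)^2 - (ξy : ℂ)^2) = 0) :
    (ξy = 0 ∧ ω = 0) ∨ (ξx = 0 ∧ ξy = 0) := by
  have hμ' : μ = (μ.im : ℂ) * I := by
    apply Complex.ext <;> simp [hμ]
  set t := μ.im with ht
  set s := Real.sin α
  set c := Real.cos α
  rw [hμ'] at hroot
  rw [Complex.ext_iff] at hroot
  simp [Complex.mul_re, Complex.mul_im, Complex.add_re, Complex.add_im, pow_two] at hroot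
  obtain ⟨h1, h2⟩ := hroot
  have hA : (c*ξx + s*t) * (c*ξx + s*t) + ξy*ξy = 0 := by
    rcases h1 with h1 | h1
    · nlinarith [mul_self_nonneg (c*ξx + s*t), mul_self_nonneg ξy,
        mul_self_nonneg (s*ξx - c*t),
        mul_nonneg hν3.le (mul_self_nonneg (s*ξx - c*t)),
        mul_nonneg hνh.le (mul_self_nonneg (c*ξx + s*t)),
        mul_nonneg hνh.le (mul_self_nonneg ξy)]
    · linarith
  have ha : c*ξx + s*t = 0 := by
    have := mul_self_eq_zero.mp (by nlinarith [mul_self_nonneg ξy] : (c*ξx+s*t)*(c*ξx+s*t) = 0)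
    exact this
  have hy : ξy = 0 := mul_self_eq_zero.mp (by nlinarith [mul_self_nonneg (c*ξx+s*t)])
  have hxx : ξx * ξx = 0 := by
    nlinarith [mul_nonneg hω.le (mul_self_nonneg t), mul_nonneg hω.le (mul_self_nonneg ξx),
      mul_self_nonneg t, mul_self_nonneg ξx]
  exact Or.inr ⟨mul_self_eq_zero.mp hxx, hy⟩
end

section
/- Let α ∈ (-π/2, π/2) with sin α ≠ 0, and ξ = (ξ_x, ξ_y) ∈ ℝ² with ξ ≠ 0. With ν_h = ν_3 = 1, β = ω = 0, s = sin α, c = cos α, the four complex roots of the polynomial μ ↦ -((icξ_x + sμ)² - ξ_y² + (isξ_x - cμ)²)·((icξ_x + sμ)² - ξ_y²) are exactly (ξ_y - i c ξ_x)/s, (-ξ_y - i c ξ_x)/s, |ξ|, and -|ξ| (counted with multiplicity). -/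
open Complex Real

theorem characteristic_roots_special_case
    (α : ℝ) (hα : α ∈ Set.Ioo (-(π/2)) (π/2)) (hs : Real.sin α ≠ 0)
    (ξx ξy : ℝ) (hξ : (ξx, ξy) ≠ (0, 0)) :
    ∀ μ : ℂ,
      -(((I * (Real.cos α : ℂ) * ξx + (Real.sin α : ℂ) * μ)^2 - (ξy : ℂ)^2
            + (I * (Real.sin α : ℂ) * ξx - (Real.cos α : ℂ) * μ)^2)
          * ((I * (Real.cos α : ℂ) * ξx + (Real.sin α : ℂ) * μ)^2 - (ξy : ℂ)^2))
      = -(Real.sin α : ℂ)^2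
          * (μ - ((ξy : ℂ) - I * (Real.cos α : ℂ) * ξx) / (Real.sin α : ℂ))
          * (μ - (-(ξy : ℂ) - I * (Real.cos α : ℂ) * ξx) / (Real.sin α : ℂ))
          * (μ - (Real.sqrt (ξx^2 + ξy^2) : ℂ))
          * (μ + (Real.sqrt (ξx^2 + ξy^2) : ℂ)) := by
  intro μ
  have hs' : (Real.sin α : ℂ) ≠ 0 := by exact_mod_cast hs
  have key : (Real.sqrt (ξx^2 + ξy^2) : ℂ)^2 = (ξx : ℂ)^2 + (ξy : ℂ)^2 := by
    norm_cast
    exact Real.sq_sqrt (by positivity)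
  have trig : (Real.sin α : ℂ)^2 + (Real.cos α : ℂ)^2 = 1 := by
    norm_cast
    exact Real.sin_sq_add_cos_sq α
  have hI : I^2 = -1 := I_sq
  have hfac : -(Real.sin α : ℂ)^2
          * (μ - ((ξy : ℂ) - I * (Real.cos α : ℂ) * ξx) / (Real.sin α : ℂ))
          * (μ - (-(ξy : ℂ) - I * (Real.cos α : ℂ) * ξx) / (Real.sin α : ℂ))
          * (μ - (Real.sqrt (ξx^2 + ξy^2) : ℂ))
          * (μ + (Real.sqrt (ξx^2 + ξy^2) : ℂ))
      = -(((Real.sin α : ℂ) * μ + I * (Real.cos α : ℂ) * ξx)^2 - (ξy : ℂ)^2)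
          * (μ^2 - (Real.sqrt (ξx^2 + ξy^2) : ℂ)^2) := by
    have hs'' : Complex.sin (α : ℂ) ≠ 0 := by
      rwa [← Complex.ofReal_sin]
    field_simp
    ring
  rw [hfac, key]
  linear_combination
    (-(((Real.sin α : ℂ) * μ + I * (Real.cos α : ℂ) * ξx)^2 - (ξy : ℂ)^2))
        * ((I^2 * (ξx : ℂ)^2 + μ^2) * trig + (ξx : ℂ)^2 * hI)
end

section
/- Let ε > 0, ω ∈ ℝ with 0 < |ωε| and ωε → 0, and let s, c be reals with s ≠ 0, c ≠ 0, s² + c² = 1. Consider the quadratic equation r² + (s²/(iωε²c²)) r + 1/ε² = 0 in r ∈ ℂ. Its two roots r₁, r₂ satisfy r₁·r₂ = 1/ε² and r₁ + r₂ = -s²/(iωε²c²); moreover, if |ωε| ≤ s²c²/(4) (so that the discriminant is dominated by its first term), then there is a root r₂ with |r₂ + iωc²/s²| ≤ C|ω|·|ωε|² for some constant C depending only on s, c. -/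
/-! Write the equation as `r² + b r + d = 0` with `b = s²/(iωε²c²)`, `d = 1/ε²`, and let
`a = -iωc²/s²`, the root of the linearised equation `b a + d = 0`. If `r₁, r₂` are the roots,
then `(a - r₁)(a - r₂) = a² + b a + d = a²` while `(a - r₁) + (a - r₂) = 2a + b`. Once
`‖a‖ ≤ ‖b‖/4` this sum has norm at least `‖b‖/2`, so one factor is at least `‖b‖/4` and the
other at most `4‖a‖²/‖b‖ = (4c⁶/s⁶)|ω||ωε|²`. -/

open Complex

theorem vieta_quadratic_of_ne {R : Type*} [CommRing R] [NoZeroDivisors R] {b d x y : R}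
    (hx : x ^ 2 + b * x + d = 0) (hy : y ^ 2 + b * y + d = 0) (hxy : x ≠ y) :
    x * y = d ∧ x + y = -b := by
  have hsum : x + y = -b := by
    have h : (x - y) * (x + y + b) = 0 := by linear_combination hx - hy
    rcases mul_eq_zero.1 h with h | h
    · exact absurd (sub_eq_zero.1 h) hxy
    · linear_combination h
  exact ⟨by linear_combination x * hsum - hx, hsum⟩

theorem IsAlgClosed.exists_sq_add_mul_add_eq_mul {K : Type*} [Field K] [IsAlgClosed K]
    (b d : K) : ∃ r₁ r₂ : K, ∀ x, x ^ 2 + b * x + d = (x - r₁) * (x - r₂) := by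
  open Polynomial in
  obtain ⟨r, hr⟩ := IsAlgClosed.exists_root (C 1 * X ^ 2 + C b * X + C d)
    (by rw [degree_quadratic one_ne_zero]; decide)
  simp only [IsRoot, eval_add, eval_mul, eval_pow, eval_C, eval_X, one_mul] at hr
  exact ⟨r, -b - r, fun x => by linear_combination hr⟩

theorem norm_mul_le_of_le_norm_add {K : Type*} [NormedField K] {u v : K} {m : ℝ}
    (hm : m ≤ ‖u + v‖) : ‖u‖ * m ≤ 2 * ‖u * v‖ ∨ ‖v‖ * m ≤ 2 * ‖u * v‖ := by
  rw [norm_mul]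
  have := norm_add_le u v
  rcases le_total ‖u‖ ‖v‖ with h | h
  · left; nlinarith [norm_nonneg u]
  · right; nlinarith [norm_nonneg v]

theorem IsAlgClosed.exists_root_near_of_mul_add_eq_zero {K : Type*} [NormedField K]
    [IsAlgClosed K] {a b d : K} (had : b * a + d = 0) (hab : ‖a‖ ≤ ‖b‖ / 4) :
    ∃ r : K, r ^ 2 + b * r + d = 0 ∧ ‖r - a‖ * ‖b‖ ≤ 4 * ‖a‖ ^ 2 := by
  obtain ⟨r₁, r₂, hfac⟩ := IsAlgClosed.exists_sq_add_mul_add_eq_mul b d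
  have hprod : (a - r₁) * (a - r₂) = a ^ 2 := by linear_combination had - hfac a
  have hsum : (a - r₁) + (a - r₂) = b + a + a := by
    linear_combination hfac 0 - hfac 1
  have hlarge : ‖b‖ / 2 ≤ ‖(a - r₁) + (a - r₂)‖ := by
    have h₁ := norm_sub_le (b + a + a) a
    have h₂ := norm_sub_le (b + a) a
    rw [add_sub_cancel_right] at h₁ h₂
    rw [hsum]
    linarith
  rcases norm_mul_le_of_le_norm_add hlarge with h | h
  · refine ⟨r₁, by linear_combination hfac r₁, ?_⟩
    rw [hprod, norm_pow, norm_sub_rev a] at h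
    linarith
  · refine ⟨r₂, by linear_combination hfac r₂, ?_⟩
    rw [hprod, norm_pow, norm_sub_rev a] at h
    linarith

section Ekman

variable {s c ε ω : ℝ}

theorem ekman_coeff_mul_linearised_root_add_eq_zero (hs : s ≠ 0) (hc : c ≠ 0) (hε : ε ≠ 0)
    (hω : ω ≠ 0) :
    (s : ℂ) ^ 2 / (I * ω * ε ^ 2 * c ^ 2) * -(I * ω * c ^ 2 / s ^ 2) + 1 / (ε : ℂ) ^ 2 = 0 := by
  field_simp [I_ne_zero, ofReal_ne_zero.2 hs, ofReal_ne_zero.2 hc, ofReal_ne_zero.2 hε,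
    ofReal_ne_zero.2 hω]
  ring

theorem norm_ekman_coeff :
    ‖(s : ℂ) ^ 2 / (I * ω * ε ^ 2 * c ^ 2)‖ = s ^ 2 / (|ω| * ε ^ 2 * c ^ 2) := by
  simp only [norm_div, norm_mul, norm_pow, norm_I, norm_real, Real.norm_eq_abs, sq_abs, one_mul]

theorem norm_ekman_linearised_root : ‖-(I * ω * c ^ 2 / s ^ 2)‖ = |ω| * c ^ 2 / s ^ 2 := by
  simp only [norm_neg, norm_div, norm_mul, norm_pow, norm_I, norm_real, Real.norm_eq_abs,
    sq_abs, one_mul]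

theorem ekman_linearised_root_le (hs : s ≠ 0) (hc : c ≠ 0) (hc1 : c ^ 2 ≤ 1) (hε : 0 < ε)
    (hω : ω ≠ 0) (hsmall : |ω * ε| ≤ s ^ 2 * c ^ 2 / 4) :
    |ω| * c ^ 2 / s ^ 2 ≤ s ^ 2 / (|ω| * ε ^ 2 * c ^ 2) / 4 := by
  have ht : (|ω| * ε) ^ 2 ≤ (s ^ 2 * c ^ 2 / 4) ^ 2 := by
    rw [← abs_of_pos hε, ← abs_mul]
    exact pow_le_pow_left₀ (abs_nonneg _) hsmall 2
  have hc8 : (c ^ 2) ^ 4 ≤ 1 := pow_le_one₀ (sq_nonneg c) hc1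
  rw [div_div, div_le_div_iff₀ (by positivity) (by positivity)]
  nlinarith [mul_le_mul_of_nonneg_left hc8 (by positivity : (0 : ℝ) ≤ s ^ 4),
    mul_le_mul_of_nonneg_left ht (by positivity : (0 : ℝ) ≤ c ^ 4)]

end Ekman

theorem ekman_quadratic_roots
    (s c : ℝ) (hs : s ≠ 0) (hc : c ≠ 0) (hsc : s^2 + c^2 = 1) :
    (∀ (ε ω : ℝ) (r1 r2 : ℂ), 0 < ε → ω ≠ 0 → 0 < |ω * ε| →
      r1^2 + ((s : ℂ)^2 / (I * ω * ε^2 * c^2)) * r1 + 1 / (ε : ℂ)^2 = 0 →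
      r2^2 + ((s : ℂ)^2 / (I * ω * ε^2 * c^2)) * r2 + 1 / (ε : ℂ)^2 = 0 →
      r1 ≠ r2 →
      r1 * r2 = 1 / (ε : ℂ)^2 ∧ r1 + r2 = -((s : ℂ)^2 / (I * ω * ε^2 * c^2))) ∧
    (∃ C : ℝ, 0 < C ∧
      ∀ (ε ω : ℝ), 0 < ε → ω ≠ 0 → 0 < |ω * ε| → |ω * ε| ≤ s^2 * c^2 / 4 →
        ∃ r2 : ℂ,
          r2^2 + ((s : ℂ)^2 / (I * ω * ε^2 * c^2)) * r2 + 1 / (ε : ℂ)^2 = 0 ∧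
          ‖r2 + I * ω * c^2 / s^2‖ ≤ C * |ω| * |ω * ε|^2) := by
  refine ⟨fun ε ω r1 r2 _ _ _ h1 h2 hne => vieta_quadratic_of_ne h1 h2 hne,
    4 * c ^ 6 / s ^ 6, by positivity, fun ε ω hε hω _ hsmall => ?_⟩
  have hc1 : c ^ 2 ≤ 1 := by linarith [sq_nonneg s]
  obtain ⟨r, hr, hnear⟩ := IsAlgClosed.exists_root_near_of_mul_add_eq_zero
    (ekman_coeff_mul_linearised_root_add_eq_zero hs hc hε.ne' hω)
    (by rw [norm_ekman_coeff, norm_ekman_linearised_root]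
        exact ekman_linearised_root_le hs hc hc1 hε hω hsmall)
  refine ⟨r, hr, ?_⟩
  rw [sub_neg_eq_add, norm_ekman_coeff, norm_ekman_linearised_root,
    ← le_div_iff₀ (by positivity)] at hnear
  refine hnear.trans_eq ?_
  rw [abs_mul, abs_of_pos hε]
  field_simp
end
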